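/- arXiv:2212.03733 — 4 statements merged into one kernel-verified Lean document; each statement's English description precedes it below -/
import Mathlib

section
/- Let 0 < γ < 1 and let r_1 < (1/(1-γ))r_2 < (1/(1-γ))^2 r_3 < … < (1/(1-γ))^{k-1} r_k ≤ 0. Fix i with 2 ≤ i ≤ k−1, and set r_low = max{r_1,…,r_{i−1}} and r_high = min{r_{i+1},…,r_k}. Then r_low < (1/(1-γ)) r_i < (1/(1-γ))^2 r_high ≤ r_high; in particular (r_low, r_i, r_high) satisfies the 3-Tiered Reward condition r_low < (1/(1-γ)) r_i < r_high. -/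
/-! The rescaled rewards `c ^ (j - 1) * r j`, with `c = 1 / (1 - γ) ≥ 1`, increase strictly up to
`c ^ (k - 1) * r k ≤ 0`, so every `r j` is nonpositive and `r m < c ^ (n - m) * r n ≤ c * r n`
for `m < n`. Applied to the tiers attaining `r_low` and `r_high`, and to `i`, this gives
`r_low < c * r_i` and `r_i < c * r_high`; multiplying the latter by `c` gives the middle
inequality, and `c ^ 2 * r_high ≤ r_high` because `r_high ≤ 0`. -/

section ScaledChain

variable {c : ℝ} {k : ℕ} {r : ℕ → ℝ}

theorem strictMonoOn_pow_mul_of_chain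
    (hchain : ∀ j, 1 ≤ j → j < k → c ^ (j - 1) * r j < c ^ j * r (j + 1)) :
    StrictMonoOn (fun j ↦ c ^ (j - 1) * r j) (Set.Icc 1 k) :=
  strictMonoOn_of_lt_add_one Set.ordConnected_Icc fun j _ hj hj' ↦ by
    simpa using hchain j hj.1 hj'.2

theorem nonpos_of_chain (hc : 0 < c)
    (hchain : ∀ j, 1 ≤ j → j < k → c ^ (j - 1) * r j < c ^ j * r (j + 1))
    (hlast : c ^ (k - 1) * r k ≤ 0) {j : ℕ} (hj : j ∈ Set.Icc 1 k) : r j ≤ 0 := by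
  have hk : k ∈ Set.Icc 1 k := ⟨hj.1.trans hj.2, le_rfl⟩
  have hscaled : c ^ (j - 1) * r j ≤ 0 :=
    ((strictMonoOn_pow_mul_of_chain hchain).monotoneOn hj hk hj.2).trans hlast
  exact nonpos_of_mul_nonpos_right hscaled (pow_pos hc _)

theorem lt_mul_of_chain (hc : 1 ≤ c)
    (hchain : ∀ j, 1 ≤ j → j < k → c ^ (j - 1) * r j < c ^ j * r (j + 1))
    (hlast : c ^ (k - 1) * r k ≤ 0) {m n : ℕ} (hm : 1 ≤ m) (hmn : m < n) (hn : n ≤ k) :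
    r m < c * r n := by
  have hc0 : 0 < c := one_pos.trans_le hc
  have hscaled : c ^ (m - 1) * r m < c ^ (m - 1) * (c ^ (n - m) * r n) := by
    rw [← mul_assoc, ← pow_add, show m - 1 + (n - m) = n - 1 by omega]
    exact strictMonoOn_pow_mul_of_chain hchain ⟨hm, by omega⟩ ⟨by omega, hn⟩ hmn
  calc r m < c ^ (n - m) * r n := lt_of_mul_lt_mul_left hscaled (pow_pos hc0 _).le
    _ ≤ c ^ 1 * r n :=
      mul_le_mul_of_nonpos_right (pow_le_pow_right₀ hc (by omega))
        (nonpos_of_chain hc0 hchain hlast ⟨by omega, hn⟩)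
    _ = c * r n := by rw [pow_one]

end ScaledChain

theorem k_tier_to_three_tier_grouping_general
    (γ : ℝ) (hγ0 : 0 < γ) (hγ1 : γ < 1)
    (k : ℕ) (r : ℕ → ℝ)
    (hchain : ∀ j, 1 ≤ j → j < k →
      (1 / (1 - γ)) ^ (j - 1) * r j < (1 / (1 - γ)) ^ j * r (j + 1))
    (hlast : (1 / (1 - γ)) ^ (k - 1) * r k ≤ 0)
    (i : ℕ)
    (rlow rhigh : ℝ)
    (hlow : IsGreatest (r '' Set.Icc 1 (i - 1)) rlow)
    (hhigh : IsLeast (r '' Set.Icc (i + 1) k) rhigh) :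
    rlow < (1 / (1 - γ)) * r i ∧
    (1 / (1 - γ)) * r i < (1 / (1 - γ)) ^ 2 * rhigh ∧
    (1 / (1 - γ)) ^ 2 * rhigh ≤ rhigh ∧
    (1 / (1 - γ)) * r i < rhigh := by
  set c := 1 / (1 - γ)
  have hc : 1 ≤ c := one_le_one_div (by linarith) (by linarith)
  obtain ⟨m, ⟨hm, hmi⟩, rfl⟩ := hlow.1
  obtain ⟨n, ⟨hin, hnk⟩, rfl⟩ := hhigh.1
  have hrn : r n ≤ 0 := nonpos_of_chain (one_pos.trans_le hc) hchain hlast ⟨by omega, hnk⟩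
  have hmid : c * r i < c ^ 2 * r n := by
    rw [sq, mul_assoc]
    exact mul_lt_mul_of_pos_left (lt_mul_of_chain hc hchain hlast (by omega) (by omega) hnk)
      (one_pos.trans_le hc)
  have hhigh_le : c ^ 2 * r n ≤ r n :=
    mul_le_of_one_le_left hrn (one_le_pow₀ hc)
  exact ⟨lt_mul_of_chain hc hchain hlast hm (by omega) (by omega), hmid, hhigh_le,
    hmid.trans_le hhigh_le⟩

theorem k_tier_to_three_tier_grouping
    (γ : ℝ) (hγ0 : 0 < γ) (hγ1 : γ < 1)
    (k : ℕ) (r : ℕ → ℝ)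
    (hchain : ∀ j, 1 ≤ j → j < k →
      (1 / (1 - γ)) ^ (j - 1) * r j < (1 / (1 - γ)) ^ j * r (j + 1))
    (hlast : (1 / (1 - γ)) ^ (k - 1) * r k ≤ 0)
    (i : ℕ) (hi1 : 2 ≤ i) (hi2 : i ≤ k - 1)
    (rlow rhigh : ℝ)
    (hlow : IsGreatest (r '' Set.Icc 1 (i - 1)) rlow)
    (hhigh : IsLeast (r '' Set.Icc (i + 1) k) rhigh) :
    rlow < (1 / (1 - γ)) * r i ∧
    (1 / (1 - γ)) * r i < (1 / (1 - γ)) ^ 2 * rhigh ∧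
    (1 / (1 - γ)) ^ 2 * rhigh ≤ rhigh ∧
    (1 / (1 - γ)) * r i < rhigh :=
  k_tier_to_three_tier_grouping_general γ hγ0 hγ1 k r hchain hlast i rlow rhigh hlow hhigh
end

section
/- (Cumulative tier visitation, k = 2 per-tier comparison core) Let 0 < γ < 1 and r_1 < r_2 ≤ 0. Suppose (p_t^1, p_t^2) and (q_t^1, q_t^2) are nonnegative sequences with p_t^1 + p_t^2 = 1 = q_t^1 + q_t^2 for every t, and suppose Σ_{j=0}^t p_j^1 ≤ Σ_{j=0}^t q_j^1 for all t, with strict inequality for some t. Then Σ_{t=0}^∞ γ^t (r_1 p_t^1 + r_2 p_t^2) > Σ_{t=0}^∞ γ^t (r_1 q_t^1 + r_2 q_t^2). -/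
/-!
Writing the tier-2 occupancy as `1 - p₁`, the difference of the two values is
`(r₂ - r₁) ∑ γᵗ (q₁ₜ - p₁ₜ)`. Abel summation against the geometric series gives
`∑ γᵗ aₜ = (1 - γ) ∑ γᵗ Aₜ` for the partial sums `Aₜ = ∑_{j ≤ t} aⱼ`, so nonnegative partial
sums of `q₁ - p₁`, one of them positive, make this difference positive.
-/

open Finset

-- The Cauchy product of `∑ γ ^ t * a t` with the geometric series `∑ γ ^ t`.
theorem hasSum_pow_mul_partialSum {𝕜 : Type*} [NormedField 𝕜] [CompleteSpace 𝕜] {γ : 𝕜}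
    (hγ : ‖γ‖ < 1) {a : ℕ → 𝕜} (ha : Summable fun t => ‖γ ^ t * a t‖) :
    HasSum (fun t => γ ^ t * ∑ j ∈ range (t + 1), a j) ((∑' t, γ ^ t * a t) * (1 - γ)⁻¹) := by
  rw [← tsum_geometric_of_norm_lt_one hγ]
  convert hasSum_sum_range_mul_of_summable_norm ha (summable_norm_geometric_of_norm_lt_one hγ)
    using 2 with t
  rw [mul_sum]
  refine sum_congr rfl fun j hj => ?_
  rw [mul_right_comm, pow_mul_pow_sub γ (Nat.le_of_lt_succ (mem_range.1 hj)), mul_comm]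

theorem summable_norm_pow_mul_of_abs_le {γ C : ℝ} (hγ0 : 0 ≤ γ) (hγ1 : γ < 1) {a : ℕ → ℝ}
    (ha : ∀ t, |a t| ≤ C) : Summable fun t => ‖γ ^ t * a t‖ := by
  refine .of_nonneg_of_le (fun t => norm_nonneg _) (fun t => ?_)
    ((summable_geometric_of_lt_one hγ0 hγ1).mul_right C)
  rw [norm_mul, norm_pow, Real.norm_of_nonneg hγ0, Real.norm_eq_abs]
  exact mul_le_mul_of_nonneg_left (ha t) (pow_nonneg hγ0 t)

theorem tsum_pow_mul_pos_of_partialSum {γ : ℝ} (hγ0 : 0 < γ) (hγ1 : γ < 1) {a : ℕ → ℝ}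
    (ha : Summable fun t => ‖γ ^ t * a t‖) (hA : ∀ t, 0 ≤ ∑ j ∈ range (t + 1), a j)
    (hpos : ∃ t, 0 < ∑ j ∈ range (t + 1), a j) : 0 < ∑' t, γ ^ t * a t := by
  obtain ⟨t₀, ht₀⟩ := hpos
  have hγ : ‖γ‖ < 1 := by rwa [Real.norm_of_nonneg hγ0.le]
  have hsum := hasSum_pow_mul_partialSum hγ ha
  have hprod : 0 < (∑' t, γ ^ t * a t) * (1 - γ)⁻¹ := by
    rw [← hsum.tsum_eq]
    exact hsum.summable.tsum_pos (fun t => mul_nonneg (pow_nonneg hγ0.le t) (hA t)) t₀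
      (mul_pos (pow_pos hγ0 t₀) ht₀)
  exact pos_of_mul_pos_left hprod (inv_nonneg.2 (by linarith))

theorem two_tier_cumulative_visitation_value_general
    (γ r1 r2 : ℝ) (hγ0 : 0 < γ) (hγ1 : γ < 1)
    (hr : r1 < r2)
    (p1 p2 q1 q2 : ℕ → ℝ)
    (hp1 : ∀ t, 0 ≤ p1 t) (hp2 : ∀ t, 0 ≤ p2 t)
    (hq1 : ∀ t, 0 ≤ q1 t) (hq2 : ∀ t, 0 ≤ q2 t)
    (hp : ∀ t, p1 t + p2 t = 1) (hq : ∀ t, q1 t + q2 t = 1)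
    (hdom : ∀ t, ∑ j ∈ Finset.range (t + 1), p1 j ≤ ∑ j ∈ Finset.range (t + 1), q1 j)
    (hstrict : ∃ t, ∑ j ∈ Finset.range (t + 1), p1 j < ∑ j ∈ Finset.range (t + 1), q1 j) :
    ∑' t : ℕ, γ ^ t * (r1 * q1 t + r2 * q2 t) <
      ∑' t : ℕ, γ ^ t * (r1 * p1 t + r2 * p2 t) := by
  have hp1_le (t : ℕ) : p1 t ≤ 1 := by linarith [hp t, hp2 t]
  have hp2_le (t : ℕ) : p2 t ≤ 1 := by linarith [hp t, hp1 t]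
  have hq1_le (t : ℕ) : q1 t ≤ 1 := by linarith [hq t, hq2 t]
  have hq2_le (t : ℕ) : q2 t ≤ 1 := by linarith [hq t, hq1 t]
  have hsummable {a : ℕ → ℝ} (h0 : ∀ t, 0 ≤ a t) (h1 : ∀ t, a t ≤ 1) :
      Summable fun t => γ ^ t * a t :=
    (summable_norm_pow_mul_of_abs_le hγ0.le hγ1 fun t =>
      (abs_of_nonneg (h0 t)).trans_le (h1 t)).of_norm
  have hvalue {x y : ℕ → ℝ} (hx : Summable fun t => γ ^ t * x t)
      (hy : Summable fun t => γ ^ t * y t) : Summable fun t => γ ^ t * (r1 * x t + r2 * y t) :=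
    ((hx.mul_left r1).add (hy.mul_left r2)).congr fun t => by ring
  have hgap : 0 < ∑' t, γ ^ t * (q1 t - p1 t) := by
    refine tsum_pow_mul_pos_of_partialSum hγ0 hγ1 (summable_norm_pow_mul_of_abs_le hγ0.le hγ1
      fun t => abs_sub_le_of_nonneg_of_le (hq1 t) (hq1_le t) (hp1 t) (hp1_le t)) ?_ ?_
    · simpa only [sum_sub_distrib, sub_nonneg] using hdom
    · simpa only [sum_sub_distrib, sub_pos] using hstrict
  have hdiff : ∑' t, γ ^ t * (r1 * p1 t + r2 * p2 t) - ∑' t, γ ^ t * (r1 * q1 t + r2 * q2 t)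
      = (r2 - r1) * ∑' t, γ ^ t * (q1 t - p1 t) := by
    rw [← (hvalue (hsummable hp1 hp1_le) (hsummable hp2 hp2_le)).tsum_sub
      (hvalue (hsummable hq1 hq1_le) (hsummable hq2 hq2_le)), ← tsum_mul_left]
    refine tsum_congr fun t => ?_
    rw [eq_sub_of_add_eq' (hp t), eq_sub_of_add_eq' (hq t)]
    ring
  linarith [mul_pos (sub_pos.2 hr) hgap]

theorem two_tier_cumulative_visitation_value
    (γ r1 r2 : ℝ) (hγ0 : 0 < γ) (hγ1 : γ < 1)
    (hr : r1 < r2) (hr2 : r2 ≤ 0)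
    (p1 p2 q1 q2 : ℕ → ℝ)
    (hp1 : ∀ t, 0 ≤ p1 t) (hp2 : ∀ t, 0 ≤ p2 t)
    (hq1 : ∀ t, 0 ≤ q1 t) (hq2 : ∀ t, 0 ≤ q2 t)
    (hp : ∀ t, p1 t + p2 t = 1) (hq : ∀ t, q1 t + q2 t = 1)
    (hdom : ∀ t, ∑ j ∈ Finset.range (t + 1), p1 j ≤ ∑ j ∈ Finset.range (t + 1), q1 j)
    (hstrict : ∃ t, ∑ j ∈ Finset.range (t + 1), p1 j < ∑ j ∈ Finset.range (t + 1), q1 j) :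
    ∑' t : ℕ, γ ^ t * (r1 * q1 t + r2 * q2 t) <
      ∑' t : ℕ, γ ^ t * (r1 * p1 t + r2 * p2 t) :=
  two_tier_cumulative_visitation_value_general γ r1 r2 hγ0 hγ1 hr p1 p2 q1 q2 hp1 hp2 hq1 hq2 hp hq
    hdom hstrict
end

section
/- (Theorem 2, general form) Let 0 < γ < 1 and r_1 < r_2 < … < r_k ≤ 0 with r_m γ^t(1−γ) strictly increasing in m. Suppose (p_t^m) and (p_t^{*m}) are nonnegative arrays with Σ_{m=1}^k p_t^m = Σ_{m=1}^k p_t^{*m} = 1 for all t. If Σ_{j=0}^t p_j^1 ≤ Σ_{j=0}^t p_j^{*1} for all t and Σ_{j=0}^t p_j^d ≥ Σ_{j=0}^t p_j^{*d} for all d ∈ {2,…,k} and all t, with strict inequality somewhere, then Σ_t γ^t Σ_m r_m p_t^m > Σ_t γ^t Σ_m r_m p_t^{*m}. -/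
theorem k_tier_cumulative_visitation_value
    (γ : ℝ) (hγ0 : 0 < γ) (hγ1 : γ < 1)
    (k : ℕ) (hk : 1 ≤ k) (r : ℕ → ℝ)
    (hinc : ∀ i, 1 ≤ i → i < k → r i < r (i + 1))
    (hrk : r k ≤ 0)
    (p ps : ℕ → ℕ → ℝ)
    (hp : ∀ t m, 0 ≤ p t m) (hps : ∀ t m, 0 ≤ ps t m)
    (hpsum : ∀ t, ∑ m ∈ Finset.Icc 1 k, p t m = 1)
    (hpssum : ∀ t, ∑ m ∈ Finset.Icc 1 k, ps t m = 1)
    (hdom1 : ∀ t, ∑ j ∈ Finset.range (t + 1), p j 1 ≤ ∑ j ∈ Finset.range (t + 1), ps j 1)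
    (hdomd : ∀ d, 2 ≤ d → d ≤ k → ∀ t,
      ∑ j ∈ Finset.range (t + 1), ps j d ≤ ∑ j ∈ Finset.range (t + 1), p j d)
    (hstrict : (∃ t, ∑ j ∈ Finset.range (t + 1), p j 1 < ∑ j ∈ Finset.range (t + 1), ps j 1) ∨
      (∃ d, 2 ≤ d ∧ d ≤ k ∧ ∃ t,
        ∑ j ∈ Finset.range (t + 1), ps j d < ∑ j ∈ Finset.range (t + 1), p j d)) :
    ∑' t : ℕ, γ ^ t * ∑ m ∈ Finset.Icc 1 k, r m * ps t m <
      ∑' t : ℕ, γ ^ t * ∑ m ∈ Finset.Icc 1 k, r m * p t m := by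
  -- basic abbreviations
  set I : Finset ℕ := Finset.Icc 1 k with hI
  set q : ℕ → ℕ → ℝ := fun t m => p t m - ps t m with hq
  set h : ℕ → ℝ := fun t => ∑ m ∈ I, r m * q t m with hh
  set D : ℕ → ℕ → ℝ := fun t m => ∑ j ∈ Finset.range (t + 1), q j m with hD
  set G : ℕ → ℝ := fun t => ∑ m ∈ I, r m * D t m with hG
  set C : ℝ := ∑ m ∈ I, |r m| with hC
  have hC0 : 0 ≤ C := Finset.sum_nonneg fun m _ => abs_nonneg _
  -- pointwise bounds
  have hple : ∀ t m, m ∈ I → p t m ≤ 1 := by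
    intro t m hm
    calc p t m ≤ ∑ m ∈ I, p t m := Finset.single_le_sum (fun i _ => hp t i) hm
    _ = 1 := hpsum t
  have hpsle : ∀ t m, m ∈ I → ps t m ≤ 1 := by
    intro t m hm
    calc ps t m ≤ ∑ m ∈ I, ps t m := Finset.single_le_sum (fun i _ => hps t i) hm
    _ = 1 := hpssum t
  have hqabs : ∀ t m, m ∈ I → |q t m| ≤ 1 := by
    intro t m hm
    rw [abs_sub_le_iff]
    constructor
    · linarith [hple t m hm, hps t m]
    · linarith [hpsle t m hm, hp t m]
  have hhabs : ∀ t, |h t| ≤ C := by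
    intro t
    calc |h t| ≤ ∑ m ∈ I, |r m * q t m| := Finset.abs_sum_le_sum_abs _ _
    _ ≤ ∑ m ∈ I, |r m| := by
        refine Finset.sum_le_sum fun m hm => ?_
        rw [abs_mul]
        calc |r m| * |q t m| ≤ |r m| * 1 :=
          mul_le_mul_of_nonneg_left (hqabs t m hm) (abs_nonneg _)
        _ = |r m| := mul_one _
    _ = C := rfl
  have hDabs : ∀ t m, m ∈ I → |D t m| ≤ (t : ℝ) + 1 := by
    intro t m hm
    calc |D t m| ≤ ∑ j ∈ Finset.range (t + 1), |q j m| := Finset.abs_sum_le_sum_abs _ _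
    _ ≤ ∑ _j ∈ Finset.range (t + 1), (1 : ℝ) :=
        Finset.sum_le_sum fun j _ => hqabs j m hm
    _ = (t : ℝ) + 1 := by simp
  have hGabs : ∀ t, |G t| ≤ C * ((t : ℝ) + 1) := by
    intro t
    calc |G t| ≤ ∑ m ∈ I, |r m * D t m| := Finset.abs_sum_le_sum_abs _ _
    _ ≤ ∑ m ∈ I, |r m| * ((t : ℝ) + 1) := by
        refine Finset.sum_le_sum fun m hm => ?_
        rw [abs_mul]
        exact mul_le_mul_of_nonneg_left (hDabs t m hm) (abs_nonneg _)
    _ = C * ((t : ℝ) + 1) := by rw [← Finset.sum_mul]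
  -- summability facts
  have hsumgeo : Summable fun t : ℕ => γ ^ t := summable_geometric_of_lt_one hγ0.le hγ1
  have habsγ : |γ| < 1 := by rw [abs_of_pos hγ0]; exact hγ1
  have hsumtg : Summable fun t : ℕ => ((t : ℝ) + 1) * γ ^ t := by
    have h1 : Summable fun t : ℕ => (t : ℝ) * γ ^ t := by
      have := summable_pow_mul_geometric_of_norm_lt_one 1 (by simpa using habsγ) (R := ℝ)
      simpa using this
    simpa [add_mul] using h1.add hsumgeo
  have hsumP : Summable fun t : ℕ => γ ^ t * ∑ m ∈ I, r m * p t m := by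
    refine Summable.of_norm_bounded (g := fun t => C * γ ^ t) (hsumgeo.mul_left C) fun t => ?_
    rw [Real.norm_eq_abs, abs_mul, abs_of_pos (pow_pos hγ0 t), mul_comm]
    refine mul_le_mul_of_nonneg_right ?_ (pow_pos hγ0 t).le
    calc |∑ m ∈ I, r m * p t m| ≤ ∑ m ∈ I, |r m * p t m| := Finset.abs_sum_le_sum_abs _ _
    _ ≤ ∑ m ∈ I, |r m| := by
        refine Finset.sum_le_sum fun m hm => ?_
        rw [abs_mul, abs_of_nonneg (hp t m)]
        calc |r m| * p t m ≤ |r m| * 1 :=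
          mul_le_mul_of_nonneg_left (hple t m hm) (abs_nonneg _)
        _ = |r m| := mul_one _
    _ = C := rfl
  have hsumPS : Summable fun t : ℕ => γ ^ t * ∑ m ∈ I, r m * ps t m := by
    refine Summable.of_norm_bounded (g := fun t => C * γ ^ t) (hsumgeo.mul_left C) fun t => ?_
    rw [Real.norm_eq_abs, abs_mul, abs_of_pos (pow_pos hγ0 t), mul_comm]
    refine mul_le_mul_of_nonneg_right ?_ (pow_pos hγ0 t).le
    calc |∑ m ∈ I, r m * ps t m| ≤ ∑ m ∈ I, |r m * ps t m| := Finset.abs_sum_le_sum_abs _ _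
    _ ≤ ∑ m ∈ I, |r m| := by
        refine Finset.sum_le_sum fun m hm => ?_
        rw [abs_mul, abs_of_nonneg (hps t m)]
        calc |r m| * ps t m ≤ |r m| * 1 :=
          mul_le_mul_of_nonneg_left (hpsle t m hm) (abs_nonneg _)
        _ = |r m| := mul_one _
    _ = C := rfl
  have hsumH : Summable fun t : ℕ => γ ^ t * h t := by
    refine Summable.of_norm_bounded (g := fun t => C * γ ^ t) (hsumgeo.mul_left C) fun t => ?_
    rw [Real.norm_eq_abs, abs_mul, abs_of_pos (pow_pos hγ0 t), mul_comm]
    exact mul_le_mul_of_nonneg_right (hhabs t) (pow_pos hγ0 t).le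
  have hsumG : Summable fun t : ℕ => γ ^ t * G t := by
    refine Summable.of_norm_bounded (g := fun t => C * (((t : ℝ) + 1) * γ ^ t))
      (hsumtg.mul_left C) fun t => ?_
    rw [Real.norm_eq_abs, abs_mul, abs_of_pos (pow_pos hγ0 t), mul_comm]
    calc |G t| * γ ^ t ≤ (C * ((t : ℝ) + 1)) * γ ^ t :=
      mul_le_mul_of_nonneg_right (hGabs t) (pow_pos hγ0 t).le
    _ = C * (((t : ℝ) + 1) * γ ^ t) := by ring
  -- the difference of the two value functions
  have hdiff : ∑' t : ℕ, γ ^ t * ∑ m ∈ I, r m * p t m -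
      ∑' t : ℕ, γ ^ t * ∑ m ∈ I, r m * ps t m = ∑' t : ℕ, γ ^ t * h t := by
    rw [← Summable.tsum_sub hsumP hsumPS]
    congr 1
    funext t
    simp only [hh, hq, mul_sub, Finset.sum_sub_distrib]
  -- monotonicity of r
  have hr1lt : ∀ m, 2 ≤ m → m ≤ k → r 1 < r m := by
    intro m hm2
    induction m, hm2 using Nat.le_induction with
    | base => intro h2k; exact hinc 1 le_rfl (by omega)
    | succ m hm ih =>
      intro hmk
      exact lt_trans (ih (by omega)) (hinc m (by omega) (by omega))
  -- signs of D
  have hD1 : ∀ t, D t 1 ≤ 0 := by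
    intro t
    have := hdom1 t
    simp only [hD, hq, Finset.sum_sub_distrib]
    linarith
  have hDd : ∀ m, 2 ≤ m → m ≤ k → ∀ t, 0 ≤ D t m := by
    intro m hm2 hmk t
    have := hdomd m hm2 hmk t
    simp only [hD, hq, Finset.sum_sub_distrib]
    linarith
  -- total mass of D vanishes
  have hDsum : ∀ t, ∑ m ∈ I, D t m = 0 := by
    intro t
    simp only [hD]
    rw [Finset.sum_comm]
    have : ∀ j, ∑ m ∈ I, q j m = 0 := by
      intro j
      simp only [hq, Finset.sum_sub_distrib, hpsum j, hpssum j, sub_self]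
    simp [this]
  -- rewrite G as a sum of nonnegative terms
  have hGalt : ∀ t, G t = ∑ m ∈ I, (r m - r 1) * D t m := by
    intro t
    simp only [hG, sub_mul, Finset.sum_sub_distrib, ← Finset.mul_sum, hDsum t, mul_zero,
      sub_zero]
  have hterm_nonneg : ∀ t, ∀ m ∈ I, 0 ≤ (r m - r 1) * D t m := by
    intro t m hm
    rw [hI, Finset.mem_Icc] at hm
    rcases eq_or_lt_of_le hm.1 with h1 | h1
    · rw [← h1]; simp
    · exact mul_nonneg (by linarith [hr1lt m h1 hm.2]) (hDd m h1 hm.2 t)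
  have hGnonneg : ∀ t, 0 ≤ G t := by
    intro t
    rw [hGalt t]
    exact Finset.sum_nonneg (hterm_nonneg t)
  -- strict positivity at some time
  have hGpos : ∃ t0, 0 < G t0 := by
    have key : ∀ t0 m0, 2 ≤ m0 → m0 ≤ k → 0 < D t0 m0 → 0 < G t0 := by
      intro t0 m0 hm2 hmk hDpos
      rw [hGalt t0]
      refine Finset.sum_pos' (hterm_nonneg t0) ⟨m0, ?_, ?_⟩
      · rw [hI, Finset.mem_Icc]; omega
      · exact mul_pos (by linarith [hr1lt m0 hm2 hmk]) hDpos
    rcases hstrict with ⟨t0, ht0⟩ | ⟨d, hd2, hdk, t0, ht0⟩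
    · -- D t0 1 < 0, hence some tier ≥ 2 strictly gains mass
      have hD1neg : D t0 1 < 0 := by
        simp only [hD, hq, Finset.sum_sub_distrib]; linarith
      have h1I : (1 : ℕ) ∈ I := by rw [hI, Finset.mem_Icc]; omega
      have hsplit : D t0 1 + ∑ m ∈ I.erase 1, D t0 m = 0 := by
        rw [Finset.add_sum_erase I _ h1I]; exact hDsum t0
      have : (0 : ℝ) < ∑ m ∈ I.erase 1, D t0 m := by linarith
      have : ∑ m ∈ I.erase 1, (0 : ℝ) < ∑ m ∈ I.erase 1, D t0 m := by simpa using this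
      obtain ⟨m0, hm0mem, hm0⟩ := Finset.exists_lt_of_sum_lt this
      rw [Finset.mem_erase, hI, Finset.mem_Icc] at hm0mem
      exact ⟨t0, key t0 m0 (by omega) hm0mem.2.2 hm0⟩
    · refine ⟨t0, key t0 d hd2 hdk ?_⟩
      simp only [hD, hq, Finset.sum_sub_distrib]; linarith
  -- Abel summation identity on partial sums
  have hG0 : G 0 = h 0 := by
    simp only [hG, hh, hD]
    exact Finset.sum_congr rfl fun m _ => by simp
  have hGsucc : ∀ t, G (t + 1) = G t + h (t + 1) := by
    intro t
    simp only [hG, hh, hD, Finset.sum_range_succ, mul_add, Finset.sum_add_distrib]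
  have habel : ∀ T, ∑ t ∈ Finset.range (T + 1), γ ^ t * h t =
      (1 - γ) * ∑ t ∈ Finset.range T, γ ^ t * G t + γ ^ T * G T := by
    intro T
    induction T with
    | zero => simp [hG0]
    | succ T ih =>
      rw [Finset.sum_range_succ, ih, Finset.sum_range_succ, hGsucc T]
      ring
  -- take limits in the Abel identity
  have hlim1 : Filter.Tendsto (fun T => ∑ t ∈ Finset.range (T + 1), γ ^ t * h t)
      Filter.atTop (nhds (∑' t, γ ^ t * h t)) :=
    (hsumH.hasSum.tendsto_sum_nat).comp (Filter.tendsto_add_atTop_nat 1)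
  have hlimtail : Filter.Tendsto (fun T : ℕ => γ ^ T * G T) Filter.atTop (nhds 0) := by
    have hb : Filter.Tendsto (fun T : ℕ => C * (((T : ℝ) + 1) * γ ^ T))
        Filter.atTop (nhds 0) := by
      have := (hsumtg.mul_left C).tendsto_atTop_zero
      exact this
    have hbn : Filter.Tendsto (fun T : ℕ => -(C * (((T : ℝ) + 1) * γ ^ T)))
        Filter.atTop (nhds 0) := by simpa using hb.neg
    have h1 : ∀ T : ℕ, |γ ^ T * G T| ≤ C * (((T : ℝ) + 1) * γ ^ T) := by
      intro T
      have hγT : (0:ℝ) < γ ^ T := pow_pos hγ0 T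
      rw [abs_mul, abs_of_pos hγT]
      calc γ ^ T * |G T| ≤ γ ^ T * (C * ((T : ℝ) + 1)) :=
        mul_le_mul_of_nonneg_left (hGabs T) hγT.le
      _ = C * (((T : ℝ) + 1) * γ ^ T) := by ring
    refine tendsto_of_tendsto_of_tendsto_of_le_of_le hbn hb ?_ ?_
    · intro T
      have := h1 T
      have := neg_abs_le (γ ^ T * G T)
      show -(C * (((T : ℝ) + 1) * γ ^ T)) ≤ γ ^ T * G T
      linarith
    · intro T
      have := h1 T
      have := le_abs_self (γ ^ T * G T)
      show γ ^ T * G T ≤ C * (((T : ℝ) + 1) * γ ^ T)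
      linarith
  have hlim2 : Filter.Tendsto
      (fun T => (1 - γ) * ∑ t ∈ Finset.range T, γ ^ t * G t + γ ^ T * G T)
      Filter.atTop (nhds ((1 - γ) * ∑' t, γ ^ t * G t)) := by
    have := (hsumG.hasSum.tendsto_sum_nat).const_mul (1 - γ)
    simpa using this.add hlimtail
  have hkey : ∑' t, γ ^ t * h t = (1 - γ) * ∑' t, γ ^ t * G t := by
    refine tendsto_nhds_unique hlim1 ?_
    exact (Filter.Tendsto.congr (fun T => (habel T).symm) hlim2)
  -- conclude
  obtain ⟨t0, ht0⟩ := hGpos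
  have hGtsumpos : 0 < ∑' t, γ ^ t * G t := by
    refine Summable.tsum_pos hsumG (fun t => mul_nonneg (pow_pos hγ0 t).le (hGnonneg t)) t0 ?_
    exact mul_pos (pow_pos hγ0 t0) ht0
  have : 0 < ∑' t, γ ^ t * h t := by
    rw [hkey]
    exact mul_pos (by linarith) hGtsumpos
  linarith [hdiff, this]
end

section
/- Suppose 0 < γ < 1 and r_obs < (1/(1-γ)) r_back < r_goal with f_t^g = γ^t r_goal + Σ_{j<t}γ^j r_back and f_t^o = γ^t r_obs + Σ_{j<t}γ^j r_back. Then for every t, f_t^o < r_back/(1-γ) < f_t^g; i.e., any trajectory that eventually reaches a goal is strictly better than wandering forever, which is strictly better than any trajectory that eventually hits an obstacle. -/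
/-!
Stopping at time `t` replaces the tail `∑_{j ≥ t} γ^j r_back = γ^t · r_back/(1-γ)` of the
wandering return by `γ^t r`, so `f_t - r_back/(1-γ) = γ^t (r - r_back/(1-γ))`, whose sign is that
of `r - r_back/(1-γ)` because `γ^t > 0`.
-/

open Finset

theorem pow_mul_add_sum_range_pow_mul_eq {γ : ℝ} (hγ : γ ≠ 1) (r b : ℝ) (t : ℕ) :
    γ ^ t * r + ∑ j ∈ range t, γ ^ j * b = b / (1 - γ) + γ ^ t * (r - b / (1 - γ)) := by
  have h1γ : 1 - γ ≠ 0 := sub_ne_zero.mpr hγ.symm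
  rw [← sum_mul, geom_sum_eq hγ]
  field_simp
  ring

theorem pow_mul_add_sum_range_pow_mul_lt {γ : ℝ} (hγ0 : 0 < γ) (hγ : γ ≠ 1) {r b : ℝ}
    (hr : r < b / (1 - γ)) (t : ℕ) :
    γ ^ t * r + ∑ j ∈ range t, γ ^ j * b < b / (1 - γ) := by
  rw [pow_mul_add_sum_range_pow_mul_eq hγ]
  have : γ ^ t * (r - b / (1 - γ)) < 0 := mul_neg_of_pos_of_neg (pow_pos hγ0 t) (by linarith)
  linarith

theorem lt_pow_mul_add_sum_range_pow_mul {γ : ℝ} (hγ0 : 0 < γ) (hγ : γ ≠ 1) {r b : ℝ}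
    (hr : b / (1 - γ) < r) (t : ℕ) :
    b / (1 - γ) < γ ^ t * r + ∑ j ∈ range t, γ ^ j * b := by
  rw [pow_mul_add_sum_range_pow_mul_eq hγ]
  have : 0 < γ ^ t * (r - b / (1 - γ)) := mul_pos (pow_pos hγ0 t) (by linarith)
  linarith

theorem goal_better_than_wandering_better_than_obstacle
    (γ robs rback rgoal : ℝ) (hγ0 : 0 < γ) (hγ1 : γ < 1)
    (h1 : robs < (1 / (1 - γ)) * rback) (h2 : (1 / (1 - γ)) * rback < rgoal)
    (fg fo : ℕ → ℝ)
    (hfg : ∀ t, fg t = γ ^ t * rgoal + ∑ j ∈ Finset.range t, γ ^ j * rback)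
    (hfo : ∀ t, fo t = γ ^ t * robs + ∑ j ∈ Finset.range t, γ ^ j * rback) :
    ∀ t : ℕ, fo t < rback / (1 - γ) ∧ rback / (1 - γ) < fg t := by
  intro t
  rw [one_div_mul_eq_div] at h1 h2
  rw [hfo, hfg]
  exact ⟨pow_mul_add_sum_range_pow_mul_lt hγ0 hγ1.ne h1 t,
    lt_pow_mul_add_sum_range_pow_mul hγ0 hγ1.ne h2 t⟩
end
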